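/- Let q ≥ 3, r ≥ 1, and let (S0, S1) be a spherical bitrade in the Hamming graph H(qr, q). Then the pair (S0 × {0} ∪ S1 × {1}, S0 × {1} ∪ S1 × {0}) is a perfect bitrade in H(qr+1, q), where C × {a} denotes the set of tuples of C each extended by one extra coordinate equal to the alphabet symbol a. -/

import Mathlib

open scoped BigOperators

/-- The ball of radius 1 centered at `x` in a graph `G`. -/
def ball1 {V : Type*} (G : SimpleGraph V) (x : V) : Set V := {y | y = x ∨ G.Adj x y}

/-- A perfect one-error-correcting code: the balls of radius 1 centered at the
vertices of `C` partition the vertex set. -/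
def IsPerfectCode {V : Type*} (G : SimpleGraph V) (C : Set V) : Prop :=
  ∀ x : V, ∃! c, c ∈ C ∧ c ∈ ball1 G x

/-- A perfect bitrade: a pair of disjoint nonempty vertex sets such that every ball of
radius 1 contains exactly one vertex of each, or none of either. -/
def IsPerfectBitrade {V : Type*} (G : SimpleGraph V) (T0 T1 : Set V) : Prop :=
  Disjoint T0 T1 ∧ T0.Nonempty ∧ T1.Nonempty ∧
    ∀ x : V,
      ((∃! y, y ∈ T0 ∧ y ∈ ball1 G x) ∧ (∃! y, y ∈ T1 ∧ y ∈ ball1 G x)) ∨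
        (∀ y, y ∈ T0 ∪ T1 → y ∉ ball1 G x)

/-- A spherical bitrade: a pair of disjoint nonempty vertex sets such that every sphere of
radius 1 contains exactly one vertex of each, or none of either. -/
def IsSphericalBitrade {V : Type*} (G : SimpleGraph V) (S0 S1 : Set V) : Prop :=
  Disjoint S0 S1 ∧ S0.Nonempty ∧ S1.Nonempty ∧
    ∀ x : V,
      ((∃! y, y ∈ S0 ∧ G.Adj x y) ∧ (∃! y, y ∈ S1 ∧ G.Adj x y)) ∨
        (∀ y, y ∈ S0 ∪ S1 → ¬ G.Adj x y)

/-- The Hamming graph `H(n,q)`: vertices are `n`-tuples over an alphabet of size `q`,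
adjacent iff they differ in exactly one coordinate. -/
def hammingGraph (n q : ℕ) : SimpleGraph (Fin n → Fin q) where
  Adj x y := hammingDist x y = 1
  symm := by constructor; intro x y h; show hammingDist y x = 1; rw [hammingDist_comm]; exact h
  loopless := by constructor; intro x h; simp [hammingDist_self] at h

/-- `f` is a `μ`-eigenfunction of `G`: `f` is not identically zero and
`μ · f x = ∑_{y ∈ O(x)} f y` for every vertex `x`. -/
def IsEigenfun {V : Type*} (G : SimpleGraph V) (μ : ℝ) (f : V → ℝ) : Prop :=
  f ≠ 0 ∧ ∀ x : V, μ * f x = ∑ᶠ y ∈ G.neighborSet x, f y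

/-- The characteristic function of a set of vertices. -/
noncomputable def chi {V : Type*} (C : Set V) : V → ℝ := Set.indicator C 1

/-- The code `C` has minimum (graph) distance exactly `d`. -/
def HasMinDist {V : Type*} (G : SimpleGraph V) (C : Set V) (d : ℕ) : Prop :=
  (∀ x ∈ C, ∀ y ∈ C, x ≠ y → (d : ℕ∞) ≤ G.edist x y) ∧
    ∃ x ∈ C, ∃ y ∈ C, x ≠ y ∧ G.edist x y = d

/-- The code `C` of `n`-tuples has minimum Hamming distance exactly `d`. -/
def HasMinHDist {n q : ℕ} (C : Set (Fin n → Fin q)) (d : ℕ) : Prop :=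
  (∀ x ∈ C, ∀ y ∈ C, x ≠ y → d ≤ hammingDist x y) ∧
    ∃ x ∈ C, ∃ y ∈ C, x ≠ y ∧ hammingDist x y = d

/-- `G` is distance-regular with intersection numbers `p i j k`. -/
def IsDistRegular {V : Type*} (G : SimpleGraph V) (p : ℕ → ℕ → ℕ → ℕ) : Prop :=
  G.Connected ∧ ∀ (i j k : ℕ) (x y : V), G.edist x y = k →
    {z : V | G.edist x z = i ∧ G.edist z y = j}.ncard = p i j k

/-!
Since `q ≥ 3`, every edge of `H(n,q)` lies in a triangle. Hence two adjacent vertices of the same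
`Si` would have a common neighbour seeing both, and a vertex of `S0` adjacent to one of `S1` would
need a neighbour in `S0` as well; so `S0 ∪ S1` is independent. The ball around a vertex `(x, a)` of
`H(n+1,q)` consists of the `(x, b)` and of the `(y, a)` with `y` adjacent to `x`. If
`x ∈ S0 ∪ S1`, independence leaves only `(x, 0)` and `(x, 1)`, one in each new set. Otherwise only
the `(y, a)` with `y ∈ S0 ∪ S1` remain; they lie in the new sets only for `a ∈ {0, 1}`, and then
the sphere condition at `x` puts exactly one in each.
-/

section Hamming

variable {m q : ℕ}

@[simp]
lemma hammingGraph_adj {x y : Fin m → Fin q} :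
    (hammingGraph m q).Adj x y ↔ hammingDist x y = 1 := Iff.rfl

lemma hammingDist_eq_one_iff {x y : Fin m → Fin q} :
    hammingDist x y = 1 ↔ ∃ i, ∀ j, x j ≠ y j ↔ j = i := by
  simp [hammingDist, Finset.card_eq_one, Finset.ext_iff]

lemma hammingDist_snoc (x y : Fin m → Fin q) (a b : Fin q) :
    hammingDist (Fin.snoc x a : Fin (m + 1) → Fin q) (Fin.snoc y b) =
      hammingDist x y + if a = b then 0 else 1 := by
  simp [hammingDist, Finset.card_filter, Fin.sum_univ_castSucc]

lemma snoc_mem_ball1_snoc_iff {x s : Fin m → Fin q} {a c : Fin q} :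
    (Fin.snoc s c : Fin (m + 1) → Fin q) ∈ ball1 (hammingGraph (m + 1) q) (Fin.snoc x a) ↔
      s = x ∨ c = a ∧ (hammingGraph m q).Adj x s := by
  simp only [ball1, Set.mem_ofPred_eq, Fin.snoc_inj, hammingGraph_adj, hammingDist_snoc]
  by_cases hac : a = c
  · subst hac
    simp
  · simp [Ne.symm hac, hac, eq_comm]

lemma hammingGraph_exists_common_neighbor (hq : 3 ≤ q) {u v : Fin m → Fin q}
    (huv : (hammingGraph m q).Adj u v) :
    ∃ w, (hammingGraph m q).Adj w u ∧ (hammingGraph m q).Adj w v := by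
  obtain ⟨i, hi⟩ := hammingDist_eq_one_iff.mp huv
  obtain ⟨c, -, hc⟩ := Finset.exists_mem_notMem_of_card_lt_card
    (s := {u i, v i}) (t := Finset.univ) (by simpa using Finset.card_le_two.trans_lt hq)
  rw [Finset.mem_insert, Finset.mem_singleton, not_or] at hc
  refine ⟨Function.update u i c, hammingDist_eq_one_iff.mpr ⟨i, fun j => ?_⟩,
    hammingDist_eq_one_iff.mpr ⟨i, fun j => ?_⟩⟩
  all_goals
    by_cases hj : j = i
    · subst hj; simp [hc.1, hc.2]
    · simp [hj, (hi j).not.mpr hj]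

end Hamming

section SphericalBitrade

variable {V : Type*} {G : SimpleGraph V} {S0 S1 : Set V}

lemma IsSphericalBitrade.symm (h : IsSphericalBitrade G S0 S1) : IsSphericalBitrade G S1 S0 :=
  let ⟨hdisj, hne0, hne1, hx⟩ := h
  ⟨hdisj.symm, hne1, hne0, fun x => (hx x).imp And.symm fun hnone y hy => hnone y hy.symm⟩

lemma IsSphericalBitrade.isIndepSet_left
    (hG : ∀ u v, G.Adj u v → ∃ w, G.Adj w u ∧ G.Adj w v) (h : IsSphericalBitrade G S0 S1) :
    G.IsIndepSet S0 := by
  intro u hu v hv _ huv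
  obtain ⟨w, hwu, hwv⟩ := hG u v huv
  rcases h.2.2.2 w with ⟨⟨y, -, hy⟩, -⟩ | hnone
  · exact huv.ne ((hy u ⟨hu, hwu⟩).trans (hy v ⟨hv, hwv⟩).symm)
  · exact hnone u (Or.inl hu) hwu

lemma IsSphericalBitrade.not_adj_of_mem_left_of_mem_right
    (hG : ∀ u v, G.Adj u v → ∃ w, G.Adj w u ∧ G.Adj w v) (h : IsSphericalBitrade G S0 S1)
    {u v : V} (hu : u ∈ S0) (hv : v ∈ S1) : ¬ G.Adj u v := by
  intro huv
  rcases h.2.2.2 u with ⟨⟨y, ⟨hy, huy⟩, -⟩, -⟩ | hnone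
  · exact h.isIndepSet_left hG hu hy huy.ne huy
  · exact hnone v (Or.inr hv) huv

lemma IsSphericalBitrade.isIndepSet_union
    (hG : ∀ u v, G.Adj u v → ∃ w, G.Adj w u ∧ G.Adj w v) (h : IsSphericalBitrade G S0 S1) :
    G.IsIndepSet (S0 ∪ S1) := by
  rintro u (hu | hu) v (hv | hv) huv
  · exact h.isIndepSet_left hG hu hv huv
  · exact h.not_adj_of_mem_left_of_mem_right hG hu hv
  · exact fun hadj => h.not_adj_of_mem_left_of_mem_right hG hv hu hadj.symm
  · exact h.symm.isIndepSet_left hG hu hv huv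

end SphericalBitrade

section SnocUnion

variable {m q : ℕ} {S0 S1 : Set (Fin m → Fin q)} {c0 c1 : Fin q} {x : Fin m → Fin q}

def snocUnion (S0 S1 : Set (Fin m → Fin q)) (c0 c1 : Fin q) : Set (Fin (m + 1) → Fin q) :=
  (fun x => Fin.snoc x c0) '' S0 ∪ (fun x => Fin.snoc x c1) '' S1

lemma snocUnion_comm : snocUnion S0 S1 c0 c1 = snocUnion S1 S0 c1 c0 := Set.union_comm _ _

lemma disjoint_snocUnion (hc : c0 ≠ c1) (hdisj : Disjoint S0 S1) :
    Disjoint (snocUnion S0 S1 c0 c1) (snocUnion S0 S1 c1 c0) := by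
  rw [Set.disjoint_left]
  rintro _ (⟨s, hs, rfl⟩ | ⟨s, hs, rfl⟩) (⟨t, ht, hts⟩ | ⟨t, ht, hts⟩) <;>
    obtain ⟨rfl, hcc⟩ := Fin.snoc_inj.mp hts
  · exact hc hcc.symm
  · exact Set.disjoint_left.mp hdisj hs ht
  · exact Set.disjoint_left.mp hdisj ht hs
  · exact hc hcc

lemma existsUnique_mem_snocUnion_ball1_of_mem (hdisj : Disjoint S0 S1)
    (hind : (hammingGraph m q).IsIndepSet (S0 ∪ S1)) (hx : x ∈ S0) (a : Fin q) :
    ∃! y, y ∈ snocUnion S0 S1 c0 c1 ∧ y ∈ ball1 (hammingGraph (m + 1) q) (Fin.snoc x a) := by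
  refine ⟨Fin.snoc x c0, ⟨Or.inl ⟨x, hx, rfl⟩, snoc_mem_ball1_snoc_iff.mpr (Or.inl rfl)⟩, ?_⟩
  rintro _ ⟨⟨s, hs, rfl⟩ | ⟨s, hs, rfl⟩, hball⟩ <;>
    rcases snoc_mem_ball1_snoc_iff.mp hball with rfl | ⟨-, hadj⟩
  · rfl
  · exact absurd hadj (hind (Or.inl hx) (Or.inl hs) hadj.ne)
  · exact absurd hs (Set.disjoint_left.mp hdisj hx)
  · exact absurd hadj (hind (Or.inl hx) (Or.inr hs) hadj.ne)

lemma existsUnique_mem_snocUnion_ball1_of_notMem (hc : c0 ≠ c1) (hx : x ∉ S0 ∪ S1)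
    (h0 : ∃! y, y ∈ S0 ∧ (hammingGraph m q).Adj x y) :
    ∃! y, y ∈ snocUnion S0 S1 c0 c1 ∧ y ∈ ball1 (hammingGraph (m + 1) q) (Fin.snoc x c0) := by
  obtain ⟨y0, ⟨hy0, hxy0⟩, huniq⟩ := h0
  refine ⟨Fin.snoc y0 c0,
    ⟨Or.inl ⟨y0, hy0, rfl⟩, snoc_mem_ball1_snoc_iff.mpr (Or.inr ⟨rfl, hxy0⟩)⟩, ?_⟩
  rintro _ ⟨⟨s, hs, rfl⟩ | ⟨s, hs, rfl⟩, hball⟩ <;>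
    rcases snoc_mem_ball1_snoc_iff.mp hball with rfl | ⟨hcc, hadj⟩
  · exact absurd (Or.inl hs) hx
  · rw [huniq s ⟨hs, hadj⟩]
  · exact absurd (Or.inr hs) hx
  · exact absurd hcc.symm hc

lemma notMem_ball1_of_mem_snocUnion {a : Fin q} (hx : x ∉ S0 ∪ S1)
    (h0 : c0 = a → ∀ s ∈ S0, ¬ (hammingGraph m q).Adj x s)
    (h1 : c1 = a → ∀ s ∈ S1, ¬ (hammingGraph m q).Adj x s) :
    ∀ y ∈ snocUnion S0 S1 c0 c1, y ∉ ball1 (hammingGraph (m + 1) q) (Fin.snoc x a) := by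
  rintro _ (⟨s, hs, rfl⟩ | ⟨s, hs, rfl⟩) hball <;>
    rcases snoc_mem_ball1_snoc_iff.mp hball with rfl | ⟨hca, hadj⟩
  · exact hx (Or.inl hs)
  · exact h0 hca s hs hadj
  · exact hx (Or.inr hs)
  · exact h1 hca s hs hadj

theorem IsSphericalBitrade.isPerfectBitrade_snocUnion (hq : 3 ≤ q) (hc : c0 ≠ c1)
    (h : IsSphericalBitrade (hammingGraph m q) S0 S1) :
    IsPerfectBitrade (hammingGraph (m + 1) q) (snocUnion S0 S1 c0 c1) (snocUnion S0 S1 c1 c0) := by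
  have hind := h.isIndepSet_union fun _ _ => hammingGraph_exists_common_neighbor hq
  obtain ⟨hdisj, ⟨s, hs⟩, -, hsph⟩ := h
  refine ⟨disjoint_snocUnion hc hdisj, ⟨_, Or.inl ⟨s, hs, rfl⟩⟩, ⟨_, Or.inl ⟨s, hs, rfl⟩⟩,
    fun y => ?_⟩
  obtain ⟨x, a, rfl⟩ : ∃ x a, y = Fin.snoc x a :=
    ⟨Fin.init y, y (Fin.last m), (Fin.snoc_init_self y).symm⟩
  by_cases hx0 : x ∈ S0
  · exact .inl ⟨existsUnique_mem_snocUnion_ball1_of_mem hdisj hind hx0 a,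
      existsUnique_mem_snocUnion_ball1_of_mem hdisj hind hx0 a⟩
  rw [Set.union_comm] at hind
  by_cases hx1 : x ∈ S1
  · rw [snocUnion_comm, snocUnion_comm (S0 := S0)]
    exact .inl ⟨existsUnique_mem_snocUnion_ball1_of_mem hdisj.symm hind hx1 a,
      existsUnique_mem_snocUnion_ball1_of_mem hdisj.symm hind hx1 a⟩
  have hx : x ∉ S0 ∪ S1 := fun hx => hx.elim hx0 hx1
  have hx' : x ∉ S1 ∪ S0 := fun hx => hx.elim hx1 hx0
  rcases hsph x with ⟨h0, h1⟩ | hnone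
  · by_cases ha0 : a = c0
    · subst ha0
      rw [snocUnion_comm (c0 := c1)]
      exact .inl ⟨existsUnique_mem_snocUnion_ball1_of_notMem hc hx h0,
        existsUnique_mem_snocUnion_ball1_of_notMem hc hx' h1⟩
    by_cases ha1 : a = c1
    · subst ha1
      rw [snocUnion_comm (c0 := c0)]
      exact .inl ⟨existsUnique_mem_snocUnion_ball1_of_notMem hc.symm hx' h1,
        existsUnique_mem_snocUnion_ball1_of_notMem hc.symm hx h0⟩
    refine .inr fun y hy => hy.elim ?_ ?_
    · exact notMem_ball1_of_mem_snocUnion hx (absurd ·.symm ha0) (absurd ·.symm ha1) y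
    · exact notMem_ball1_of_mem_snocUnion hx (absurd ·.symm ha1) (absurd ·.symm ha0) y
  · refine .inr fun y hy => hy.elim ?_ ?_ <;>
      exact notMem_ball1_of_mem_snocUnion hx (fun _ s hs => hnone s (.inl hs))
        (fun _ s hs => hnone s (.inr hs)) y

end SnocUnion

/-- From a spherical bitrade `(S0,S1)` in `H(qr,q)` one obtains the perfect
bitrade `(S0 × {0} ∪ S1 × {1}, S0 × {1} ∪ S1 × {0})` in `H(qr+1,q)`, where `C × {a}` appends
the symbol `a` as an extra last coordinate to every tuple of `C`. -/
theorem statement8 (q r : ℕ) (hq : 3 ≤ q)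
    (S0 S1 : Set (Fin (q * r) → Fin q))
    (hbt : IsSphericalBitrade (hammingGraph (q * r) q) S0 S1) :
    IsPerfectBitrade (hammingGraph (q * r + 1) q)
      ((fun x => Fin.snoc x (⟨0, by omega⟩ : Fin q)) '' S0 ∪
        (fun x => Fin.snoc x (⟨1, by omega⟩ : Fin q)) '' S1)
      ((fun x => Fin.snoc x (⟨1, by omega⟩ : Fin q)) '' S0 ∪
        (fun x => Fin.snoc x (⟨0, by omega⟩ : Fin q)) '' S1) :=
  hbt.isPerfectBitrade_snocUnion hq (by simp [Fin.ext_iff])
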